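/- Let d ≥ 1, s = (s_1,...,s_d) a tuple of positive integers with weight w = s_1+...+s_d and partial sums l(i) = s_1+...+s_i (l(0)=0). For commuting variables t_1,...,t_d, x, y and every positive integer n: ∑_{k=1}^n C(n,k) x^k y^{n-k} · l_k^⋆(s,t) = ∑_{n ≥ n_1 ≥ ... ≥ n_w ≥ 1} (x+y)^{n-n_1} y^{n_1 + n_{l(1)+1} + ... + n_{l(d-1)+1} - n_{l(1)} - ... - n_{l(d)}} (∏_{r=1}^{d-1} (t_r x + y)^{n_{l(r)} - n_{l(r)+1}}) ((t_d x + y)^{n_{l(d)}} - y^{n_{l(d)}}) / (n_1 ··· n_w), where l_k^⋆(s,t) = ∑_{k ≥ m_1 ≥ ... ≥ m_d ≥ 1} t_1^{m_1-m_2} ··· t_{d-1}^{m_{d-1}-m_d} t_d^{m_d} / (m_1^{s_1} ··· m_d^{s_d}). -/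

import Mathlib

/-- Weakly decreasing chains `hi ≥ f 0 ≥ f 1 ≥ ⋯ ≥ f (d-1) ≥ lo`. -/
def chainsIcc (d lo hi : ℕ) : Finset (Fin d → ℕ) :=
  (Fintype.piFinset fun _ : Fin d => Finset.Icc lo hi).filter
    fun f => ∀ i j : Fin d, i ≤ j → f j ≤ f i

/-- `idx f j` is the paper's `n_j` (1-indexed entry of the chain `f`). -/
def idx {w : ℕ} (f : Fin w → ℕ) (j : ℕ) : ℕ :=
  if h : j - 1 < w then f ⟨j - 1, h⟩ else 0

/-- `lsum s i = l(i) = s_1 + ⋯ + s_i` (with `s j` playing the role of `s_{j+1}`). -/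
def lsum (s : ℕ → ℕ) (i : ℕ) : ℕ := ∑ j ∈ Finset.range i, s j

open Finset

/-!
Write `B h N = ∑_{k=1}^N C(N,k) x^k y^(N-k) h k` for the binomial transform and
`H_c g N = ∑_{a=1}^N c^(N-a) g a / a` for a harmonic layer. Pascal's rule gives
`B ∘ H_c = H_(c x + y) ∘ B`, and `H_0` is division by `N`. The star polylogarithm is a nested
sum of `d` layers, the `r`-th of which is `H_(t_(r-1)) ∘ H_0^(s_r - 1)` (with `t_0 = 1`), applied to
`m ↦ t_d^m`, whose binomial transform is `(t_d x + y)^N - y^N`. Pushing `B` through all layers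
turns the left side into `w = l(d)` nested harmonic layers, coloured `t_(r-1) x + y` at the start
of the `r`-th block and `y` inside it. Expanding this nested sum over the chains
`n ≥ n_1 ≥ ⋯ ≥ n_w ≥ 1` and telescoping the exponents of `y` within each block gives the right side.
-/

lemma Fin.antitone_cons {α : Type*} [Preorder α] {w : ℕ} {a : α} {g : Fin w → α} :
    Antitone (Fin.cons a g : Fin (w + 1) → α) ↔ (∀ i, g i ≤ a) ∧ Antitone g := by
  simpa only [antitone_iff_forall_lt, Relator.LiftFun, ge_iff_le] using
    Fin.liftFun_cons (α := α) (· ≥ ·) (f := g) (a := a)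

lemma sum_Icc_one_eq_sum_range {M : Type*} [AddCommMonoid M] (f : ℕ → M) (N : ℕ) :
    ∑ k ∈ Icc 1 N, f k = ∑ k ∈ range N, f (k + 1) := by
  rw [← Ico_add_one_right_eq_Icc, sum_Ico_eq_sum_range]
  simp [add_comm]

lemma prod_pow_tsub_of_antitone {M : Type*} [CommMonoid M] (a : M) {u : ℕ → ℕ} (hu : Antitone u)
    (k : ℕ) : ∏ j ∈ range k, a ^ (u j - u (j + 1)) = a ^ (u 0 - u k) := by
  induction k with
  | zero => simp
  | succ k ih =>
    have h1 : u (k + 1) ≤ u k := hu (by omega)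
    have h2 : u k ≤ u 0 := hu (by omega)
    rw [prod_range_succ, ih, ← pow_add]
    congr 1
    omega

lemma lsum_zero (s : ℕ → ℕ) : lsum s 0 = 0 := rfl

lemma lsum_succ' (s : ℕ → ℕ) (d : ℕ) : lsum s (d + 1) = s 0 + lsum (fun i => s (i + 1)) d := by
  rw [lsum, sum_range_succ', add_comm]
  rfl

lemma mem_chainsIcc {w lo hi : ℕ} {f : Fin w → ℕ} :
    f ∈ chainsIcc w lo hi ↔ (∀ i, f i ∈ Icc lo hi) ∧ Antitone f := by
  simp [chainsIcc, Fintype.mem_piFinset, Antitone]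

lemma chainsIcc_zero (lo hi : ℕ) : chainsIcc 0 lo hi = {Fin.elim0} :=
  eq_singleton_iff_unique_mem.2
    ⟨mem_chainsIcc.2 ⟨finZeroElim, fun i => i.elim0⟩, fun _ _ => Subsingleton.elim _ _⟩

lemma cons_mem_chainsIcc {w lo hi a : ℕ} {g : Fin w → ℕ} :
    (Fin.cons a g : Fin (w + 1) → ℕ) ∈ chainsIcc (w + 1) lo hi ↔
      a ∈ Icc lo hi ∧ g ∈ chainsIcc w lo a := by
  simp only [mem_chainsIcc, Fin.forall_fin_succ, Fin.cons_zero, Fin.cons_succ, Fin.antitone_cons,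
    mem_Icc]
  constructor
  · rintro ⟨⟨ha, hg⟩, hga, hanti⟩
    exact ⟨ha, fun i => ⟨(hg i).1, hga i⟩, hanti⟩
  · rintro ⟨ha, hg, hanti⟩
    exact ⟨⟨ha, fun i => ⟨(hg i).1, (hg i).2.trans ha.2⟩⟩, fun i => (hg i).2, hanti⟩

lemma sum_chainsIcc_succ {M : Type*} [AddCommMonoid M] (w lo hi : ℕ)
    (F : (Fin (w + 1) → ℕ) → M) :
    ∑ f ∈ chainsIcc (w + 1) lo hi, F f =
      ∑ a ∈ Icc lo hi, ∑ g ∈ chainsIcc w lo a, F (Fin.cons a g) := by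
  rw [← sum_sigma (Icc lo hi) (fun a => chainsIcc w lo a) (fun p => F (Fin.cons p.1 p.2))]
  refine sum_nbij' (fun f => ⟨f 0, Fin.tail f⟩) (fun p => Fin.cons p.1 p.2) ?_ ?_ ?_ ?_ ?_
  · intro f hf
    rw [← Fin.cons_self_tail f, cons_mem_chainsIcc] at hf
    exact mem_sigma.2 hf
  · rintro ⟨a, g⟩ h
    exact cons_mem_chainsIcc.2 (mem_sigma.1 h)
  · intro f _
    exact Fin.cons_self_tail f
  · rintro ⟨a, g⟩ _
    simp
  · intro f _
    rw [Fin.cons_self_tail]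

-- `idx f 0` is junk (`0 - 1 = 0` in `ℕ`), so the top `n_0 = N` of the chain is supplied here.
def chainAt (N : ℕ) {w : ℕ} (f : Fin w → ℕ) (j : ℕ) : ℕ :=
  if j = 0 then N else idx f j

@[simp] lemma chainAt_zero (N : ℕ) {w : ℕ} (f : Fin w → ℕ) : chainAt N f 0 = N := rfl

@[simp] lemma chainAt_succ (N : ℕ) {w : ℕ} (f : Fin w → ℕ) (j : ℕ) :
    chainAt N f (j + 1) = idx f (j + 1) := rfl

lemma chainAt_of_ne_zero (N : ℕ) {w : ℕ} (f : Fin w → ℕ) {j : ℕ} (hj : j ≠ 0) :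
    chainAt N f j = idx f j := if_neg hj

lemma chainAt_cons (N a : ℕ) {w : ℕ} (g : Fin w → ℕ) (j : ℕ) :
    chainAt N (Fin.cons a g : Fin (w + 1) → ℕ) (j + 1) = chainAt a g j := by
  rcases j with _ | j
  · simp [idx]
  · simp only [chainAt_succ, idx, Nat.add_sub_cancel]
    by_cases h : j < w
    · rw [dif_pos (by omega), dif_pos h]
      rfl
    · rw [dif_neg (by omega), dif_neg h]

lemma antitone_chainAt {w N : ℕ} {f : Fin w → ℕ} (hf : f ∈ chainsIcc w 1 N) :
    Antitone (chainAt N f) := by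
  obtain ⟨hmem, hanti⟩ := mem_chainsIcc.1 hf
  refine antitone_nat_of_succ_le fun j => ?_
  rcases j with _ | j
  · simp only [chainAt_succ, chainAt_zero, idx]
    split_ifs
    exacts [(mem_Icc.1 (hmem _)).2, Nat.zero_le _]
  · simp only [chainAt_succ, idx, Nat.add_sub_cancel]
    split_ifs with h1 h2
    exacts [hanti (Fin.mk_le_mk.2 (by omega)), absurd h1 (by omega), Nat.zero_le _, Nat.zero_le _]

section NestedSums

variable {R : Type*} [CommSemiring R]

def layer (K : ℕ → ℕ → R) (g : ℕ → R) (N : ℕ) : R := ∑ a ∈ Icc 1 N, K N a * g a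

def nestedSum : ℕ → (ℕ → ℕ → ℕ → R) → (ℕ → R) → ℕ → R
  | 0, _, g => g
  | w + 1, K, g => layer (K 0) (nestedSum w (fun j => K (j + 1)) g)

lemma nestedSum_eq_sum_chainsIcc (w : ℕ) (K : ℕ → ℕ → ℕ → R) (g : ℕ → R) (N : ℕ) :
    nestedSum w K g N = ∑ f ∈ chainsIcc w 1 N,
      (∏ j ∈ range w, K j (chainAt N f j) (chainAt N f (j + 1))) * g (chainAt N f w) := by
  induction w generalizing K N with
  | zero => simp [nestedSum, chainsIcc_zero]
  | succ w ih =>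
    rw [sum_chainsIcc_succ]
    simp only [nestedSum, layer, ih, mul_sum]
    refine sum_congr rfl fun a _ => sum_congr rfl fun g' _ => ?_
    simp only [prod_range_succ', chainAt_cons, chainAt_zero]
    ring

lemma nestedSum_add (u v : ℕ) (K : ℕ → ℕ → ℕ → R) (g : ℕ → R) :
    nestedSum (u + v) K g = nestedSum u K (nestedSum v (fun j => K (j + u)) g) := by
  induction u generalizing K with
  | zero => rw [zero_add]; rfl
  | succ u ih =>
    rw [Nat.add_right_comm]
    exact congrArg (layer (K 0)) (ih _)

lemma nestedSum_congr {w : ℕ} {K K' : ℕ → ℕ → ℕ → R} (h : ∀ j < w, K j = K' j) (g : ℕ → R) :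
    nestedSum w K g = nestedSum w K' g := by
  induction w generalizing K K' with
  | zero => rfl
  | succ w ih =>
    simp only [nestedSum]
    rw [h 0 w.succ_pos, ih fun j hj => h (j + 1) (by omega)]

lemma nestedSum_const (w : ℕ) (K : ℕ → ℕ → R) (g : ℕ → R) :
    nestedSum w (fun _ => K) g = (layer K)^[w] g := by
  induction w with
  | zero => rfl
  | succ w ih => rw [Function.iterate_succ_apply', ← ih]; rfl

end NestedSums

section BinomialTransform

variable {A : Type*} [CommSemiring A] [Algebra ℚ A]

def harmonicKernel (c : A) (N a : ℕ) : A := (a : ℚ)⁻¹ • c ^ (N - a)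

lemma layer_harmonicKernel_succ (c : A) (g : ℕ → A) (N : ℕ) :
    layer (harmonicKernel c) g (N + 1) =
      c * layer (harmonicKernel c) g N + ((N + 1 : ℕ) : ℚ)⁻¹ • g (N + 1) := by
  rw [layer, sum_Icc_succ_top (by omega), layer, mul_sum, harmonicKernel, Nat.sub_self, pow_zero,
    smul_mul_assoc, one_mul]
  congr 1
  refine sum_congr rfl fun a ha => ?_
  rw [harmonicKernel, harmonicKernel, Nat.sub_add_comm (mem_Icc.1 ha).2, pow_succ,
    smul_mul_assoc, smul_mul_assoc, mul_smul_comm]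
  congr 1
  ring

-- Also at `N = 0`, where both sides vanish since `(0 : ℚ)⁻¹ = 0`.
lemma layer_harmonicKernel_zero (g : ℕ → A) (N : ℕ) :
    layer (harmonicKernel 0) g N = (N : ℚ)⁻¹ • g N := by
  cases N with
  | zero => simp [layer]
  | succ N => rw [layer_harmonicKernel_succ, zero_mul, zero_add]

lemma iterate_layer_harmonicKernel_zero (k : ℕ) (g : ℕ → A) (N : ℕ) :
    (layer (harmonicKernel 0))^[k] g N = ((N : ℚ) ^ k)⁻¹ • g N := by
  induction k with
  | zero => simp
  | succ k ih =>
    rw [Function.iterate_succ_apply', layer_harmonicKernel_zero, ih, smul_smul, pow_succ, mul_inv,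
      mul_comm]

lemma layer_pow_inv_smul {e : ℕ} (he : 1 ≤ e) (c : A) (g : ℕ → A) :
    layer (fun N a => ((a : ℚ) ^ e)⁻¹ • c ^ (N - a)) g =
      layer (harmonicKernel c) ((layer (harmonicKernel 0))^[e - 1] g) := by
  obtain ⟨e, rfl⟩ := Nat.exists_eq_add_of_le' he
  funext N
  refine sum_congr rfl fun a _ => ?_
  rw [iterate_layer_harmonicKernel_zero, harmonicKernel, Nat.add_sub_cancel, smul_mul_smul,
    smul_mul_assoc, pow_succ, mul_inv, mul_comm]

variable (x y : A)

def binomialTransform (h : ℕ → A) (N : ℕ) : A :=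
  ∑ k ∈ Icc 1 N, (N.choose k : ℚ) • (x ^ k * y ^ (N - k) * h k)

lemma binomialTransform_eq_sum_range {h : ℕ → A} (h0 : h 0 = 0) (N : ℕ) :
    binomialTransform x y h N =
      ∑ k ∈ range (N + 1), (N.choose k : ℚ) • (x ^ k * y ^ (N - k) * h k) := by
  rw [sum_range_succ', h0, mul_zero, smul_zero, add_zero, binomialTransform,
    sum_Icc_one_eq_sum_range]

lemma binomialTransform_succ (h : ℕ → A) (N : ℕ) :
    binomialTransform x y h (N + 1) = y * binomialTransform x y h N +
      x * ∑ k ∈ range (N + 1), (N.choose k : ℚ) • (x ^ k * y ^ (N - k) * h (k + 1)) := by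
  have hlow : ∑ k ∈ range (N + 1),
      (N.choose (k + 1) : ℚ) • (x ^ (k + 1) * y ^ (N + 1 - (k + 1)) * h (k + 1)) =
        y * binomialTransform x y h N := by
    rw [sum_range_succ, Nat.choose_succ_self, Nat.cast_zero, zero_smul, add_zero,
      binomialTransform, sum_Icc_one_eq_sum_range, mul_sum]
    refine sum_congr rfl fun k hk => ?_
    rw [mul_smul_comm, Nat.add_sub_add_right, show N - k = N - (k + 1) + 1 by
      have := mem_range.1 hk; omega]
    congr 1
    ring
  rw [binomialTransform, sum_Icc_one_eq_sum_range, ← hlow, mul_sum, ← sum_add_distrib]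
  refine sum_congr rfl fun k _ => ?_
  rw [Nat.choose_succ_succ', Nat.cast_add, add_smul, mul_smul_comm, Nat.add_sub_add_right,
    add_comm]
  congr 2
  ring

theorem binomialTransform_layer_harmonicKernel (c : A) (h : ℕ → A) :
    binomialTransform x y (layer (harmonicKernel c) h) =
      layer (harmonicKernel (c * x + y)) (binomialTransform x y h) := by
  have hG0 : layer (harmonicKernel c) h 0 = 0 := by simp [layer]
  funext N
  induction N with
  | zero => simp [binomialTransform, layer]
  | succ N ih =>
    have hshift : ∑ k ∈ range (N + 1), (N.choose k : ℚ) •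
        (x ^ k * y ^ (N - k) * layer (harmonicKernel c) h (k + 1)) =
          c * binomialTransform x y (layer (harmonicKernel c) h) N + ∑ k ∈ range (N + 1),
            (N.choose k : ℚ) • (x ^ k * y ^ (N - k) * (((k + 1 : ℕ) : ℚ)⁻¹ • h (k + 1))) := by
      rw [binomialTransform_eq_sum_range x y hG0, mul_sum, ← sum_add_distrib]
      refine sum_congr rfl fun k _ => ?_
      rw [layer_harmonicKernel_succ, mul_add, smul_add, mul_smul_comm _ c]
      congr 2
      ring
    have hpascal : x * ∑ k ∈ range (N + 1),
        (N.choose k : ℚ) • (x ^ k * y ^ (N - k) * (((k + 1 : ℕ) : ℚ)⁻¹ • h (k + 1))) =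
          ((N + 1 : ℕ) : ℚ)⁻¹ • binomialTransform x y h (N + 1) := by
      rw [binomialTransform, sum_Icc_one_eq_sum_range, mul_sum, smul_sum]
      refine sum_congr rfl fun k _ => ?_
      have hchoose : (N.choose k : ℚ) * ((k + 1 : ℕ) : ℚ)⁻¹ =
          ((N + 1 : ℕ) : ℚ)⁻¹ * ((N + 1).choose (k + 1) : ℚ) := by
        have hq : ((N + 1 : ℕ) : ℚ) * N.choose k = (N + 1).choose (k + 1) * ((k + 1 : ℕ) : ℚ) := by
          exact_mod_cast Nat.add_one_mul_choose_eq N k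
        field_simp
        linear_combination hq
      simp only [Nat.add_sub_add_right, mul_smul_comm, smul_smul]
      rw [hchoose]
      congr 1
      ring
    rw [binomialTransform_succ, layer_harmonicKernel_succ, ← ih, hshift, mul_add, hpascal]
    ring

lemma binomialTransform_iterate_layer_harmonicKernel_zero (k : ℕ) (g : ℕ → A) :
    binomialTransform x y ((layer (harmonicKernel 0))^[k] g) =
      (layer (harmonicKernel y))^[k] (binomialTransform x y g) := by
  induction k with
  | zero => rfl
  | succ k ih =>
    rw [Function.iterate_succ_apply', Function.iterate_succ_apply',
      binomialTransform_layer_harmonicKernel, ih, zero_mul, zero_add]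

end BinomialTransform

section BlockColor

variable {A : Type*} [CommSemiring A] (x y : A)

def blockColor : ℕ → (ℕ → ℕ) → (ℕ → A) → ℕ → A
  | 0, _, _, _ => y
  | d + 1, s, c, j =>
    if j = 0 then c 0 * x + y
    else if j < s 0 then y
    else blockColor d (fun i => s (i + 1)) (fun i => c (i + 1)) (j - s 0)

lemma blockColor_succ_of_lt {d : ℕ} {s : ℕ → ℕ} (c : ℕ → A) {j : ℕ} (hj0 : j ≠ 0)
    (hj : j < s 0) : blockColor x y (d + 1) s c j = y := by
  rw [blockColor, if_neg hj0, if_pos hj]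

lemma blockColor_succ_add {d : ℕ} {s : ℕ → ℕ} (hs : 1 ≤ s 0) (c : ℕ → A) (j : ℕ) :
    blockColor x y (d + 1) s c (j + s 0) =
      blockColor x y d (fun i => s (i + 1)) (fun i => c (i + 1)) j := by
  rw [blockColor, if_neg (by omega), if_neg (by omega), Nat.add_sub_cancel]

lemma prod_blockColor_pow (d : ℕ) {s : ℕ → ℕ} (hs : ∀ i < d, 1 ≤ s i) (c : ℕ → A)
    {u : ℕ → ℕ} (hu : Antitone u) :
    ∏ j ∈ range (lsum s d), blockColor x y d s c j ^ (u j - u (j + 1)) =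
      (∏ r ∈ range d, (c r * x + y) ^ (u (lsum s r) - u (lsum s r + 1))) *
        y ^ ∑ r ∈ range d, (u (lsum s r + 1) - u (lsum s (r + 1))) := by
  induction d generalizing s c u with
  | zero => simp [lsum_zero]
  | succ d ih =>
    have hs0 : 1 ≤ s 0 := hs 0 d.succ_pos
    have hblock : ∏ j ∈ range (s 0), blockColor x y (d + 1) s c j ^ (u j - u (j + 1)) =
        (c 0 * x + y) ^ (u 0 - u 1) * y ^ (u 1 - u (s 0)) := by
      obtain ⟨e, he⟩ := Nat.exists_eq_add_of_le' hs0
      rw [he, prod_range_succ', mul_comm, blockColor, if_pos rfl,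
        ← prod_pow_tsub_of_antitone y (u := fun j => u (j + 1)) (fun a b h => hu (by omega))]
      refine congrArg _ (prod_congr rfl fun j hj => ?_)
      rw [blockColor_succ_of_lt x y c j.succ_ne_zero (by rw [he]; exact Nat.succ_lt_succ (mem_range.1 hj))]
    have htail : ∏ j ∈ range (lsum (fun i => s (i + 1)) d),
        blockColor x y (d + 1) s c (s 0 + j) ^ (u (s 0 + j) - u (s 0 + j + 1)) =
          (∏ r ∈ range d, (c (r + 1) * x + y) ^
            (u (s 0 + lsum (fun i => s (i + 1)) r) - u (s 0 + lsum (fun i => s (i + 1)) r + 1))) *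
          y ^ ∑ r ∈ range d, (u (s 0 + lsum (fun i => s (i + 1)) r + 1) -
            u (s 0 + lsum (fun i => s (i + 1)) (r + 1))) := by
      have := ih (fun i hi => hs (i + 1) (by omega)) (fun i => c (i + 1))
        (u := fun j => u (s 0 + j)) (fun a b h => hu (by omega))
      simp only [← add_assoc] at this
      rw [← this]
      refine prod_congr rfl fun j _ => ?_
      rw [add_comm (s 0) j, blockColor_succ_add x y hs0]
    rw [lsum_succ', prod_range_add, hblock, htail, prod_range_succ', sum_range_succ']
    simp only [lsum_succ', lsum_zero, add_zero, zero_add]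
    rw [pow_add]
    ring

end BlockColor

section StarPolylog

variable {A : Type*} [CommRing A] [Algebra ℚ A] (x y : A)

def starKernel (s : ℕ → ℕ) (c : ℕ → A) (j N a : ℕ) : A := ((a : ℚ) ^ s j)⁻¹ • c j ^ (N - a)

lemma binomialTransform_pow (c : A) (N : ℕ) :
    binomialTransform x y (fun k => c ^ k) N = (c * x + y) ^ N - y ^ N := by
  rw [add_pow, sum_range_succ', binomialTransform, sum_Icc_one_eq_sum_range]
  simp only [pow_zero, one_mul, Nat.sub_zero, Nat.choose_zero_right, Nat.cast_one, mul_one,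
    add_sub_cancel_right]
  refine sum_congr rfl fun k _ => ?_
  rw [Nat.cast_smul_eq_nsmul, nsmul_eq_mul, mul_pow]
  ring

lemma nestedSum_blockColor_succ {d : ℕ} {s : ℕ → ℕ} (hs : 1 ≤ s 0) (c : ℕ → A) (g : ℕ → A) :
    nestedSum (lsum s (d + 1)) (fun j => harmonicKernel (blockColor x y (d + 1) s c j)) g =
      layer (harmonicKernel (c 0 * x + y)) ((layer (harmonicKernel y))^[s 0 - 1]
        (nestedSum (lsum (fun i => s (i + 1)) d)
          (fun j => harmonicKernel (blockColor x y d (fun i => s (i + 1)) (fun i => c (i + 1)) j))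
          g)) := by
  rw [lsum_succ', nestedSum_add]
  simp only [blockColor_succ_add x y hs]
  obtain ⟨e, he⟩ := Nat.exists_eq_add_of_le' hs
  rw [he, Nat.add_sub_cancel, ← nestedSum_const]
  exact congrArg (layer _) (nestedSum_congr (fun j hj => by
    simp only [blockColor_succ_of_lt x y (s := s) c j.succ_ne_zero (by omega)]) _)

theorem binomialTransform_nestedSum_starKernel (d : ℕ) (s : ℕ → ℕ) (hs : ∀ i < d, 1 ≤ s i)
    (c : ℕ → A) :
    binomialTransform x y (nestedSum d (starKernel s c) fun m => c d ^ m) =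
      nestedSum (lsum s d) (fun j => harmonicKernel (blockColor x y d s c j))
        fun N => (c d * x + y) ^ N - y ^ N := by
  induction d generalizing s c with
  | zero =>
    funext N
    exact binomialTransform_pow x y (c 0) N
  | succ d ih =>
    have hs0 : 1 ≤ s 0 := hs 0 d.succ_pos
    rw [nestedSum_blockColor_succ x y hs0, ← ih _ (fun i hi => hs (i + 1) (by omega))]
    show binomialTransform x y (layer (fun N a => ((a : ℚ) ^ s 0)⁻¹ • c 0 ^ (N - a)) _) = _
    rw [layer_pow_inv_smul hs0, binomialTransform_layer_harmonicKernel,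
      binomialTransform_iterate_layer_harmonicKernel_zero]
    rfl

-- The paper's `l_k^⋆(s; t)`, with `t j` standing for `t_(j+1)`.
def starPolylog (d : ℕ) (s : ℕ → ℕ) (t : ℕ → A) (k : ℕ) : A :=
  ∑ m ∈ chainsIcc d 1 k, (∏ j ∈ range d, (idx m (j + 1) : ℚ) ^ s j)⁻¹ •
    ((∏ j ∈ range (d - 1), t j ^ (idx m (j + 1) - idx m (j + 2))) * t (d - 1) ^ (idx m d))

lemma starPolylog_eq_nestedSum (d : ℕ) (s : ℕ → ℕ) {c : ℕ → A} (hc0 : c 0 = 1) :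
    starPolylog (d + 1) s (fun j => c (j + 1)) =
      nestedSum (d + 1) (starKernel s c) fun m => c (d + 1) ^ m := by
  funext k
  rw [nestedSum_eq_sum_chainsIcc]
  refine sum_congr rfl fun m _ => ?_
  simp only [starKernel, prod_smul, prod_inv_distrib, smul_mul_assoc, chainAt_succ,
    prod_range_succ' (fun j => c j ^ _), hc0, one_pow, mul_one, Nat.add_sub_cancel]

lemma nestedSum_blockColor_eq_sum_chainsIcc (d : ℕ) {s : ℕ → ℕ} (hs : ∀ i < d + 1, 1 ≤ s i)
    (c : ℕ → A) (n : ℕ) :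
    nestedSum (lsum s (d + 1)) (fun j => harmonicKernel (blockColor x y (d + 1) s c j))
        (fun N => (c (d + 1) * x + y) ^ N - y ^ N) n =
      ∑ f ∈ chainsIcc (lsum s (d + 1)) 1 n,
        (∏ j ∈ range (lsum s (d + 1)), (idx f (j + 1) : ℚ))⁻¹ •
          ((c 0 * x + y) ^ (n - idx f 1) *
            y ^ ((idx f 1 + ∑ r ∈ range d, idx f (lsum s (r + 1) + 1)) -
                  ∑ r ∈ range (d + 1), idx f (lsum s (r + 1))) *
            (∏ r ∈ range d,
              (c (r + 1) * x + y) ^ (idx f (lsum s (r + 1)) - idx f (lsum s (r + 1) + 1))) *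
            ((c (d + 1) * x + y) ^ idx f (lsum s (d + 1)) - y ^ idx f (lsum s (d + 1)))) := by
  rw [nestedSum_eq_sum_chainsIcc]
  refine sum_congr rfl fun f hf => ?_
  have hu := antitone_chainAt hf
  have hgap : ∀ r < d + 1, lsum s r + 1 ≤ lsum s (r + 1) := fun r hr => by
    have := hs r hr
    rw [lsum, lsum, sum_range_succ]
    omega
  have hpos : ∀ r < d + 1, lsum s (r + 1) ≠ 0 := fun r hr => by
    have := hgap r hr
    omega
  have hexp : ∑ r ∈ range (d + 1), (chainAt n f (lsum s r + 1) - chainAt n f (lsum s (r + 1))) =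
      (idx f 1 + ∑ r ∈ range d, idx f (lsum s (r + 1) + 1)) -
        ∑ r ∈ range (d + 1), idx f (lsum s (r + 1)) := by
    rw [sum_tsub_distrib _ fun r hr => hu (hgap r (mem_range.1 hr)), sum_range_succ', lsum_zero,
      add_comm]
    congr 1
    refine sum_congr rfl fun r hr => ?_
    rw [chainAt_of_ne_zero n f (hpos r (mem_range.1 hr))]
  have hprod : ∏ r ∈ range d, (c (r + 1) * x + y) ^
      (chainAt n f (lsum s (r + 1)) - chainAt n f (lsum s (r + 1) + 1)) =
        ∏ r ∈ range d, (c (r + 1) * x + y) ^ (idx f (lsum s (r + 1)) - idx f (lsum s (r + 1) + 1)) :=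
    prod_congr rfl fun r hr => by
      rw [chainAt_of_ne_zero n f (hpos r (Nat.lt_succ_of_lt (mem_range.1 hr))), chainAt_succ]
  simp only [harmonicKernel, prod_smul, prod_inv_distrib, smul_mul_assoc]
  congr 1
  rw [prod_blockColor_pow x y (d + 1) hs c hu, prod_range_succ', hexp, hprod,
    chainAt_of_ne_zero n f (hpos d d.lt_succ_self), lsum_zero, chainAt_zero, zero_add,
    chainAt_succ]
  ring

end StarPolylog

theorem main_corollary_general {A : Type*} [CommRing A] [Algebra ℚ A]
    (d : ℕ) (hd : 1 ≤ d) (s : ℕ → ℕ) (hs : ∀ i < d, 1 ≤ s i)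
    (t : ℕ → A) (x y : A) (n : ℕ) :
    ∑ k ∈ Finset.Icc 1 n, (n.choose k : ℚ) •
        (x ^ k * y ^ (n - k) *
          ∑ m ∈ chainsIcc d 1 k,
            (∏ j ∈ Finset.range d, (idx m (j + 1) : ℚ) ^ s j)⁻¹ •
              ((∏ j ∈ Finset.range (d - 1), t j ^ (idx m (j + 1) - idx m (j + 2))) *
                t (d - 1) ^ (idx m d)))
      = ∑ f ∈ chainsIcc (lsum s d) 1 n,
          (∏ j ∈ Finset.range (lsum s d), (idx f (j + 1) : ℚ))⁻¹ •
            ((x + y) ^ (n - idx f 1) *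
              y ^ ((idx f 1 + ∑ r ∈ Finset.range (d - 1), idx f (lsum s (r + 1) + 1)) -
                    ∑ r ∈ Finset.range d, idx f (lsum s (r + 1))) *
              (∏ r ∈ Finset.range (d - 1),
                (t r * x + y) ^ (idx f (lsum s (r + 1)) - idx f (lsum s (r + 1) + 1))) *
              ((t (d - 1) * x + y) ^ (idx f (lsum s d)) - y ^ (idx f (lsum s d)))) := by
  obtain ⟨d, rfl⟩ := Nat.exists_eq_add_of_le' hd
  let c : ℕ → A := fun | 0 => 1 | j + 1 => t j
  calc _ = binomialTransform x y (starPolylog (d + 1) s t) n := rfl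
    _ = binomialTransform x y (nestedSum (d + 1) (starKernel s c) fun m => c (d + 1) ^ m) n := by
      rw [← starPolylog_eq_nestedSum d s (c := c) rfl]
    _ = nestedSum (lsum s (d + 1)) (fun j => harmonicKernel (blockColor x y (d + 1) s c j))
          (fun N => (c (d + 1) * x + y) ^ N - y ^ N) n :=
      congrFun (binomialTransform_nestedSum_starKernel x y (d + 1) s hs c) n
    _ = _ := by
      rw [nestedSum_blockColor_eq_sum_chainsIcc x y d hs c n, show c 0 = 1 from rfl, one_mul]
      rfl

theorem main_corollary {A : Type*} [CommRing A] [Algebra ℚ A]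
    (d : ℕ) (hd : 1 ≤ d) (s : ℕ → ℕ) (hs : ∀ i < d, 1 ≤ s i)
    (t : ℕ → A) (x y : A) (n : ℕ) (hn : 1 ≤ n) :
    ∑ k ∈ Finset.Icc 1 n, (n.choose k : ℚ) •
        (x ^ k * y ^ (n - k) *
          ∑ m ∈ chainsIcc d 1 k,
            (∏ j ∈ Finset.range d, (idx m (j + 1) : ℚ) ^ s j)⁻¹ •
              ((∏ j ∈ Finset.range (d - 1), t j ^ (idx m (j + 1) - idx m (j + 2))) *
                t (d - 1) ^ (idx m d)))
      = ∑ f ∈ chainsIcc (lsum s d) 1 n,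
          (∏ j ∈ Finset.range (lsum s d), (idx f (j + 1) : ℚ))⁻¹ •
            ((x + y) ^ (n - idx f 1) *
              y ^ ((idx f 1 + ∑ r ∈ Finset.range (d - 1), idx f (lsum s (r + 1) + 1)) -
                    ∑ r ∈ Finset.range d, idx f (lsum s (r + 1))) *
              (∏ r ∈ Finset.range (d - 1),
                (t r * x + y) ^ (idx f (lsum s (r + 1)) - idx f (lsum s (r + 1) + 1))) *
              ((t (d - 1) * x + y) ^ (idx f (lsum s d)) - y ^ (idx f (lsum s d)))) :=
  main_corollary_general d hd s hs t x y n
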